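/- arXiv:2210.16286 — 2 statements merged into one kernel-verified Lean document; each statement's English description precedes it below -/
import Mathlib

section
/- Assume σ is bounded, σ' is bounded, and there are reals I_l < I_r and K > 0 with |σ'(u)| ≥ K for all u in the open interval I = (I_l, I_r). Let λ_min ≥ 0 be the smallest eigenvalue of G, let Θ_t = (A_t, U_t) be a mean-field flow for (G, μ₀), and assume the loss t ↦ L_t is differentiable. Then for every â > 0 and every t ≥ 0, −(d/dt) L_t ≥ (K² λ_min â² / (2n)) · (min_{1≤k≤n} μ_t(Ξ_k)) · L_t, where Ξ_k := {(a,u) ∈ ℝ × ℝⁿ : |a| ≥ â/2 and u_k ∈ I}. (This is the Polyak–Łojasiewicz-type inequality for the mean-field training dynamics, obtained from the positive definiteness of the time-varying kernel.) -/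
open MeasureTheory

noncomputable section

/-- A mean-field training flow for the partially-trained three-layer network,
projected onto the `n` training points.  `A t w` is the outer weight and
`U t w` the vector of pre-activations at time `t` of the neuron with initial
data `w = (a, u)`. -/
structure MFFlow (n : ℕ) (y : Fin n → ℝ) (σ : ℝ → ℝ) (βa : ℝ)
    (G : Matrix (Fin n) (Fin n) ℝ) (μ₀ : Measure (ℝ × (Fin n → ℝ))) where
  A : ℝ → ℝ × (Fin n → ℝ) → ℝ
  U : ℝ → ℝ × (Fin n → ℝ) → Fin n → ℝ
  initA : ∀ w, A 0 w = w.1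
  initU : ∀ w, U 0 w = w.2
  cont : Continuous (fun p : ℝ × (ℝ × (Fin n → ℝ)) => (A p.1 p.2, U p.1 p.2))
  integ : ∀ t, 0 ≤ t → ∀ k : Fin n,
    Integrable (fun w => A t w * σ (U t w k)) μ₀
  odeA : ∀ w, ∀ t, 0 ≤ t → HasDerivAt (fun s => A s w)
      (-(βa / n) * ∑ k : Fin n,
        ((∫ w', A t w' * σ (U t w' k) ∂μ₀) - y k) * σ (U t w k)) t
  odeU : ∀ w, ∀ t, 0 ≤ t → ∀ l : Fin n, HasDerivAt (fun s => U s w l)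
      (-(1 / n) * A t w * ∑ k : Fin n,
        ((∫ w', A t w' * σ (U t w' k) ∂μ₀) - y k) * deriv σ (U t w k) * G k l) t

namespace MFFlow

variable {n : ℕ} {y : Fin n → ℝ} {σ : ℝ → ℝ} {βa : ℝ}
  {G : Matrix (Fin n) (Fin n) ℝ} {μ₀ : Measure (ℝ × (Fin n → ℝ))}

/-- The model prediction `f_t^k` on the `k`-th training point. -/
def f (Φ : MFFlow n y σ βa G μ₀) (t : ℝ) (k : Fin n) : ℝ :=
  ∫ w, Φ.A t w * σ (Φ.U t w k) ∂μ₀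

/-- The training loss `L_t`. -/
def loss (Φ : MFFlow n y σ βa G μ₀) (t : ℝ) : ℝ :=
  (1 / (2 * n)) * ∑ k : Fin n, (Φ.f t k - y k) ^ 2

/-- The time-`t` mean-field measure `μ_t`, the pushforward of `μ₀` by `Θ_t`. -/
def μt (Φ : MFFlow n y σ βa G μ₀) (t : ℝ) : Measure (ℝ × (Fin n → ℝ)) :=
  μ₀.map (fun w => (Φ.A t w, Φ.U t w))

end MFFlow

/-- The standard Gaussian measure on `ℝⁿ`. -/
def stdGaussianPi (n : ℕ) : Measure (Fin n → ℝ) :=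
  Measure.pi fun _ => ProbabilityTheory.gaussianReal 0 1

open Classical in
/-- The positive semidefinite square root of a matrix (junk value `0` if the
matrix is not positive semidefinite). -/
def psdSqrt {n : ℕ} (M : Matrix (Fin n) (Fin n) ℝ) : Matrix (Fin n) (Fin n) ℝ :=
  if h : M.PosSemidef then
    (h.1.eigenvectorUnitary : Matrix (Fin n) (Fin n) ℝ) *
      Matrix.diagonal ((↑) ∘ (√·) ∘ h.1.eigenvalues) *
      (star h.1.eigenvectorUnitary : Matrix (Fin n) (Fin n) ℝ)
  else 0

/-- The centered Gaussian measure `N(0, M)` on `ℝⁿ`, i.e. the law of `M^{1/2} Z`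
for `Z` a standard Gaussian vector. -/
def gaussianOf {n : ℕ} (M : Matrix (Fin n) (Fin n) ℝ) : Measure (Fin n → ℝ) :=
  (stdGaussianPi n).map (fun z => (psdSqrt M).mulVec z)

end

/-!
Differentiating `f_tᵏ = ∫ A_t σ(U_tᵏ) dμ₀` under the integral sign and inserting the flow equations
gives `-L'_t = n⁻¹ ∫ ((β_a/n) (Σ_k ζ_k σ(Uᵏ))² + n⁻¹ A² vᵀ G v) dμ₀` with `v_k = ζ_k σ'(Uᵏ)`.
Differentiation under the integral is justified by dominated convergence: on a compact time
interval the residuals are bounded through the loss, so `A_t` moves at bounded speed from a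
compactly supported start, and the time derivative of each neuron's output is uniformly bounded.
The flow is only defined for `t ≥ 0`, so this yields right derivatives, which determine `L'_t`
because `L` is assumed differentiable. Dropping the nonnegative first term and using
`vᵀ G v ≥ λ_min |v|²`, it remains to note that `A² σ'(Uᵏ)² ≥ (â/2)² K²` on `Ξ_k` and
`Σ_k ζ_k² = 2n L_t`.
-/

open MeasureTheory Set Filter Topology Matrix

theorem Finset.abs_sum_mul_le {ι : Type*} (s : Finset ι) {a b B : ι → ℝ} {Z : ℝ}
    (ha : ∀ i, |a i| ≤ Z) (hb : ∀ i, |b i| ≤ B i) :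
    |∑ i ∈ s, a i * b i| ≤ ∑ i ∈ s, Z * B i :=
  (abs_sum_le_sum_abs _ _).trans <| Finset.sum_le_sum fun i _ => by
    rw [abs_mul]; exact mul_le_mul (ha i) (hb i) (abs_nonneg _) ((abs_nonneg _).trans (ha i))

theorem Matrix.IsHermitian.mul_dotProduct_self_le_dotProduct_mulVec {ι : Type*} [Fintype ι]
    [DecidableEq ι] {G : Matrix ι ι ℝ} (hG : G.IsHermitian) {c : ℝ}
    (hc : ∀ lam : ℝ, (∃ v : ι → ℝ, v ≠ 0 ∧ G *ᵥ v = lam • v) → c ≤ lam) (v : ι → ℝ) :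
    c * (v ⬝ᵥ v) ≤ v ⬝ᵥ G *ᵥ v := by
  have hB : (G - c • 1).IsHermitian := hG.sub (isHermitian_one.smul (IsSelfAdjoint.all c))
  have hpsd : (G - c • 1).PosSemidef := by
    refine hB.posSemidef_iff_eigenvalues_nonneg.2 fun i => ?_
    have hv := hB.mulVec_eigenvectorBasis i
    have hne : ⇑(hB.eigenvectorBasis i) ≠ 0 := fun h =>
      (hB.eigenvectorBasis).orthonormal.ne_zero i (by ext j; exact congrFun h j)
    have := hc (hB.eigenvalues i + c) ⟨_, hne, by
      rw [sub_mulVec, smul_mulVec, one_mulVec] at hv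
      rw [add_smul, ← hv]; abel⟩
    simp only [Pi.zero_apply]; linarith
  have := hpsd.dotProduct_mulVec_nonneg v
  rw [star_trivial, sub_mulVec, smul_mulVec, one_mulVec, dotProduct_sub, dotProduct_smul,
    smul_eq_mul] at this
  linarith

theorem hasDerivWithinAt_integral_Ici_of_norm_deriv_le {α E : Type*} [MeasurableSpace α]
    {μ : Measure α} [IsFiniteMeasure μ] [NormedAddCommGroup E] [NormedSpace ℝ E]
    {F F' : ℝ → α → E} {t T C : ℝ} (htT : t < T)
    (hF_int : ∀ s ∈ Icc t T, Integrable (F s) μ)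
    (hF' : ∀ a, ∀ s ∈ Icc t T, HasDerivWithinAt (F · a) (F' s a) (Icc t T) s)
    (h_bound : ∀ᵐ a ∂μ, ∀ s ∈ Icc t T, ‖F' s a‖ ≤ C) :
    HasDerivWithinAt (fun s => ∫ a, F s a ∂μ) (∫ a, F' t a ∂μ) (Ici t) t := by
  have htmem : t ∈ Icc t T := left_mem_Icc.2 htT.le
  refine HasDerivWithinAt.Ici_of_Ioi ((hasDerivWithinAt_iff_tendsto_slope' self_notMem_Ioi).2 ?_)
  have hIoc : ∀ᶠ s in 𝓝[>] t, s ∈ Ioc t T := Ioc_mem_nhdsGT htT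
  refine (tendsto_integral_filter_of_dominated_convergence (F := fun s a => slope (F · a) t s)
    (fun _ => C) ?_ ?_ (integrable_const C) ?_).congr' ?_
  · filter_upwards [hIoc] with s hs
    simp only [slope_def_module]
    exact (((hF_int s (Ioc_subset_Icc_self hs)).sub (hF_int t htmem)).smul _).aestronglyMeasurable
  · filter_upwards [hIoc] with s hs
    filter_upwards [h_bound] with a ha
    have hmvt := (convex_Icc t T).norm_image_sub_le_of_norm_hasDerivWithin_le (hF' a) ha htmem
      (Ioc_subset_Icc_self hs)
    rw [slope_def_module, norm_smul, norm_inv, Real.norm_eq_abs, abs_of_pos (sub_pos.2 hs.1)]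
    rw [Real.norm_eq_abs, abs_of_pos (sub_pos.2 hs.1)] at hmvt
    rw [inv_mul_le_iff₀ (sub_pos.2 hs.1)]
    linarith
  · refine ae_of_all _ fun a => ?_
    exact (hasDerivWithinAt_iff_tendsto_slope' self_notMem_Ioi).1
      ((hF' a t htmem).mono_of_mem_nhdsWithin (Icc_mem_nhdsGT htT))
  · filter_upwards [hIoc] with s hs
    simp only [slope_def_module]
    rw [integral_smul, integral_sub (hF_int s (Ioc_subset_Icc_self hs)) (hF_int t htmem)]

theorem MeasureTheory.exists_ae_abs_fst_le {X : Type*} [MeasurableSpace X]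
    {μ : Measure (ℝ × X)} {Kc : Set ℝ} (hKc : IsCompact Kc) (h : μ {w | w.1 ∉ Kc} = 0) :
    ∃ R, ∀ᵐ w ∂μ, |w.1| ≤ R := by
  obtain ⟨R, hR⟩ := hKc.isBounded.exists_norm_le
  exact ⟨R, (ae_iff.2 h).mono fun w hw => hR _ hw⟩

theorem mul_indicator_le_sq_mul_sq {ι : Type*} {g : ℝ → ℝ} {I : Set ℝ} {c K : ℝ} (hc : 0 ≤ c)
    (hK : 0 ≤ K) (hg : ∀ u ∈ I, K ≤ |g u|) (k : ι) (x : ℝ × (ι → ℝ)) :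
    c ^ 2 * K ^ 2 * {p : ℝ × (ι → ℝ) | c ≤ |p.1| ∧ p.2 k ∈ I}.indicator 1 x
      ≤ x.1 ^ 2 * g (x.2 k) ^ 2 := by
  by_cases hx : x ∈ {p : ℝ × (ι → ℝ) | c ≤ |p.1| ∧ p.2 k ∈ I}
  · calc c ^ 2 * K ^ 2 * {p : ℝ × (ι → ℝ) | c ≤ |p.1| ∧ p.2 k ∈ I}.indicator 1 x
          = (c * K) ^ 2 := by rw [indicator_of_mem hx, Pi.one_apply, mul_one, mul_pow]
      _ ≤ (|x.1| * |g (x.2 k)|) ^ 2 :=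
          pow_le_pow_left₀ (mul_nonneg hc hK) (mul_le_mul hx.1 (hg _ hx.2) hK (abs_nonneg _)) 2
      _ = x.1 ^ 2 * g (x.2 k) ^ 2 := by rw [mul_pow, sq_abs, sq_abs]
  · rw [indicator_of_notMem hx, mul_zero]
    positivity

namespace MFFlow

variable {n : ℕ} {y : Fin n → ℝ} {σ : ℝ → ℝ} {βa : ℝ}
  {G : Matrix (Fin n) (Fin n) ℝ} {μ₀ : Measure (ℝ × (Fin n → ℝ))}
  (Φ : MFFlow n y σ βa G μ₀)

noncomputable def residual (t : ℝ) (k : Fin n) : ℝ := Φ.f t k - y k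

noncomputable def derivA (t : ℝ) (w : ℝ × (Fin n → ℝ)) : ℝ :=
  -(βa / n) * ∑ k, Φ.residual t k * σ (Φ.U t w k)

noncomputable def derivU (t : ℝ) (w : ℝ × (Fin n → ℝ)) (l : Fin n) : ℝ :=
  -(1 / n) * Φ.A t w * ∑ k, Φ.residual t k * deriv σ (Φ.U t w k) * G k l

noncomputable def derivOutput (t : ℝ) (w : ℝ × (Fin n → ℝ)) (k : Fin n) : ℝ :=
  Φ.derivA t w * σ (Φ.U t w k) + Φ.A t w * (deriv σ (Φ.U t w k) * Φ.derivU t w k)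

noncomputable def residualGrad (t : ℝ) (w : ℝ × (Fin n → ℝ)) (k : Fin n) : ℝ :=
  Φ.residual t k * deriv σ (Φ.U t w k)

noncomputable def dissipation (t : ℝ) (w : ℝ × (Fin n → ℝ)) : ℝ :=
  (βa / n) * (∑ k, Φ.residual t k * σ (Φ.U t w k)) ^ 2 +
    (1 / n) * Φ.A t w ^ 2 * (Φ.residualGrad t w ⬝ᵥ G *ᵥ Φ.residualGrad t w)

theorem continuous_flow (t : ℝ) : Continuous fun w => (Φ.A t w, Φ.U t w) :=
  Φ.cont.comp (Continuous.prodMk_right t)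

theorem continuous_A (t : ℝ) : Continuous (Φ.A t) := (Φ.continuous_flow t).fst

theorem continuous_U (t : ℝ) (k : Fin n) : Continuous (Φ.U t · k) :=
  (continuous_apply k).comp (Φ.continuous_flow t).snd

theorem hasDerivAt_output (hσ : Differentiable ℝ σ) (w : ℝ × (Fin n → ℝ)) (k : Fin n) {t : ℝ}
    (ht : 0 ≤ t) :
    HasDerivAt (fun s => Φ.A s w * σ (Φ.U s w k)) (Φ.derivOutput t w k) t :=
  (Φ.odeA w t ht).mul ((hσ _).hasDerivAt.comp t (Φ.odeU w t ht k))

theorem sum_residual_sq (t : ℝ) : ∑ k, Φ.residual t k ^ 2 = 2 * n * Φ.loss t := by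
  rcases Nat.eq_zero_or_pos n with rfl | hn
  · simp
  · rw [loss]
    field_simp
    rfl

theorem abs_derivA_le {t Z M : ℝ} (hZ : ∀ k, |Φ.residual t k| ≤ Z) (hσ : ∀ u, |σ u| ≤ M)
    (w : ℝ × (Fin n → ℝ)) : |Φ.derivA t w| ≤ |βa / n| * ∑ _k : Fin n, Z * M := by
  rw [derivA, abs_mul, abs_neg]
  gcongr
  exact Finset.abs_sum_mul_le _ hZ fun k => hσ _

theorem abs_derivU_le {t Z L : ℝ} (hZ : ∀ k, |Φ.residual t k| ≤ Z)
    (hσ' : ∀ u, |deriv σ u| ≤ L) (w : ℝ × (Fin n → ℝ)) (l : Fin n) :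
    |Φ.derivU t w l| ≤ |1 / (n : ℝ)| * |Φ.A t w| * ∑ k, Z * L * |G k l| := by
  rw [derivU, abs_mul, abs_mul, abs_neg]
  gcongr
  refine Finset.abs_sum_mul_le _ (fun k => ?_) fun k => le_rfl
  rw [abs_mul]
  exact mul_le_mul (hZ k) (hσ' _) (abs_nonneg _) ((abs_nonneg _).trans (hZ k))

theorem ae_abs_A_le {R T C : ℝ} (hR : ∀ᵐ w ∂μ₀, |w.1| ≤ R)
    (hC : ∀ s ∈ Icc 0 T, ∀ w, |Φ.derivA s w| ≤ C) :
    ∀ᵐ w ∂μ₀, ∀ s ∈ Icc 0 T, |Φ.A s w| ≤ R + C * T := by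
  filter_upwards [hR] with w hw s hs
  have hmvt := (convex_Icc 0 T).norm_image_sub_le_of_norm_hasDerivWithin_le
    (fun r hr => (Φ.odeA w r hr.1).hasDerivWithinAt) (fun r hr => hC r hr w)
    (left_mem_Icc.2 (hs.1.trans hs.2)) hs
  rw [Real.norm_eq_abs, Real.norm_eq_abs, Φ.initA, sub_zero, abs_of_nonneg hs.1] at hmvt
  have hC0 : 0 ≤ C := (abs_nonneg _).trans (hC s hs w)
  have := abs_sub_abs_le_abs_sub (Φ.A s w) w.1
  nlinarith [hs.2]

theorem exists_bound_residual {T : ℝ} (hL : ContinuousOn Φ.loss (Icc 0 T)) :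
    ∃ Z, ∀ s ∈ Icc 0 T, ∀ k, |Φ.residual s k| ≤ Z := by
  obtain ⟨CL, hCL⟩ := isCompact_Icc.exists_bound_of_continuousOn hL
  refine ⟨√(2 * n * CL), fun s hs k => Real.abs_le_sqrt ?_⟩
  calc Φ.residual s k ^ 2 ≤ ∑ j, Φ.residual s j ^ 2 :=
        Finset.single_le_sum (fun j _ => sq_nonneg (Φ.residual s j)) (Finset.mem_univ k)
    _ = 2 * n * Φ.loss s := Φ.sum_residual_sq s
    _ ≤ 2 * n * CL := by
        gcongr
        exact (le_abs_self _).trans (hCL s hs)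

theorem exists_ae_bound_derivOutput {T M L R : ℝ} (hσ : ∀ u, |σ u| ≤ M)
    (hσ' : ∀ u, |deriv σ u| ≤ L) (hR : ∀ᵐ w ∂μ₀, |w.1| ≤ R)
    (hL : ContinuousOn Φ.loss (Icc 0 T)) (k : Fin n) :
    ∃ C, ∀ᵐ w ∂μ₀, ∀ s ∈ Icc 0 T, |Φ.derivOutput s w k| ≤ C := by
  obtain ⟨Z, hZ⟩ := Φ.exists_bound_residual hL
  set CA' := |βa / n| * ∑ _k : Fin n, Z * M
  set CA := R + CA' * T
  have hA' : ∀ s ∈ Icc 0 T, ∀ w, |Φ.derivA s w| ≤ CA' := fun s hs w =>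
    Φ.abs_derivA_le (hZ s hs) hσ w
  refine ⟨CA' * M + CA * (L * (|1 / (n : ℝ)| * CA * ∑ j, Z * L * |G j k|)), ?_⟩
  filter_upwards [Φ.ae_abs_A_le hR hA'] with w hA s hs
  have hU := Φ.abs_derivU_le (hZ s hs) hσ' w k
  have hL0 : 0 ≤ L := (abs_nonneg _).trans (hσ' 0)
  have hZ0 : 0 ≤ Z := (abs_nonneg _).trans (hZ s hs k)
  calc |Φ.derivOutput s w k|
      ≤ |Φ.derivA s w| * |σ (Φ.U s w k)| +
          |Φ.A s w| * (|deriv σ (Φ.U s w k)| * |Φ.derivU s w k|) := by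
        rw [derivOutput, ← abs_mul, ← abs_mul, ← abs_mul]
        exact abs_add_le _ _
    _ ≤ _ := by
        have hCA' : 0 ≤ CA' := (abs_nonneg _).trans (hA' s hs w)
        have hCA : 0 ≤ CA := (abs_nonneg _).trans (hA s hs)
        have hG : 0 ≤ ∑ j, Z * L * |G j k| :=
          Finset.sum_nonneg fun j _ => mul_nonneg (mul_nonneg hZ0 hL0) (abs_nonneg _)
        gcongr ?_ * ?_ + ?_ * (?_ * ?_)
        exacts [hA' s hs w, hσ _, hA s hs, hσ' _, hU.trans (by gcongr; exact hA s hs)]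

theorem measurable_derivOutput (hσ : Continuous σ) (t : ℝ) (k : Fin n) :
    Measurable (Φ.derivOutput t · k) := by
  have hA := (Φ.continuous_A t).measurable
  have hU := fun j => (Φ.continuous_U t j).measurable
  have hσ := hσ.measurable
  have hσ' := measurable_deriv σ
  unfold derivOutput derivA derivU
  fun_prop

theorem integrable_derivOutput [IsFiniteMeasure μ₀] (hσ : Continuous σ) {t T C : ℝ}
    (ht : t ∈ Icc 0 T) (k : Fin n) (hC : ∀ᵐ w ∂μ₀, ∀ s ∈ Icc 0 T, |Φ.derivOutput s w k| ≤ C) :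
    Integrable (Φ.derivOutput t · k) μ₀ :=
  (integrable_const C).mono' (Φ.measurable_derivOutput hσ t k).aestronglyMeasurable
    (hC.mono fun _ hw => hw t ht)

theorem hasDerivWithinAt_f [IsFiniteMeasure μ₀] (hσ : Differentiable ℝ σ) {t T C : ℝ}
    (ht : 0 ≤ t) (htT : t < T) (k : Fin n)
    (hC : ∀ᵐ w ∂μ₀, ∀ s ∈ Icc 0 T, |Φ.derivOutput s w k| ≤ C) :
    HasDerivWithinAt (Φ.f · k) (∫ w, Φ.derivOutput t w k ∂μ₀) (Ici t) t :=
  hasDerivWithinAt_integral_Ici_of_norm_deriv_le htT (fun s hs => Φ.integ s (ht.trans hs.1) k)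
    (fun w _ hs => (Φ.hasDerivAt_output hσ w k (ht.trans hs.1)).hasDerivWithinAt)
    (hC.mono fun _ hw s hs => hw s ⟨ht.trans hs.1, hs.2⟩)

theorem deriv_loss {t : ℝ} {D : Fin n → ℝ} (hL : DifferentiableAt ℝ Φ.loss t)
    (hD : ∀ k, HasDerivWithinAt (Φ.f · k) (D k) (Ici t) t) :
    deriv Φ.loss t = (1 / n) * ∑ k, Φ.residual t k * D k := by
  have h : HasDerivWithinAt Φ.loss ((1 / (2 * n)) * ∑ k, 2 * Φ.residual t k ^ (2 - 1) * D k)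
      (Ici t) t :=
    (HasDerivWithinAt.fun_sum fun k _ => ((hD k).sub_const (y k)).pow 2).const_mul _
  rw [← hL.hasDerivAt.hasDerivWithinAt.derivWithin (uniqueDiffWithinAt_Ici t),
    h.derivWithin (uniqueDiffWithinAt_Ici t), Finset.mul_sum, Finset.mul_sum]
  refine Finset.sum_congr rfl fun k _ => ?_
  ring

theorem sum_residual_mul_derivOutput (t : ℝ) (w : ℝ × (Fin n → ℝ)) :
    ∑ k, Φ.residual t k * Φ.derivOutput t w k = -Φ.dissipation t w := by
  set v := Φ.residualGrad t w with hv
  have hU : ∑ l, v l * Φ.derivU t w l = -(1 / n) * Φ.A t w * ∑ l, v l * ∑ k, v k * G k l := by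
    rw [Finset.mul_sum]
    exact Finset.sum_congr rfl fun l _ => by simp only [derivU, hv, residualGrad]; ring
  have hquad : v ⬝ᵥ G *ᵥ v = ∑ l, v l * ∑ k, v k * G k l := by
    rw [dotProduct_mulVec, dotProduct_comm]; rfl
  calc ∑ k, Φ.residual t k * Φ.derivOutput t w k
      = Φ.derivA t w * ∑ k, Φ.residual t k * σ (Φ.U t w k) +
          Φ.A t w * ∑ l, v l * Φ.derivU t w l := by
        simp only [derivOutput, mul_add, Finset.sum_add_distrib, Finset.mul_sum, hv, residualGrad]
        congr 1 <;> exact Finset.sum_congr rfl fun k _ => by ring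
    _ = -Φ.dissipation t w := by
        rw [hU, dissipation, ← hv, hquad, derivA]
        ring

theorem neg_deriv_loss_eq_integral_dissipation [IsFiniteMeasure μ₀] {t : ℝ}
    (hL : DifferentiableAt ℝ Φ.loss t)
    (hD : ∀ k, HasDerivWithinAt (Φ.f · k) (∫ w, Φ.derivOutput t w k ∂μ₀) (Ici t) t)
    (hint : ∀ k, Integrable (Φ.derivOutput t · k) μ₀) :
    -deriv Φ.loss t = (1 / n) * ∫ w, Φ.dissipation t w ∂μ₀ := by
  have h w : Φ.dissipation t w = -∑ k, Φ.residual t k * Φ.derivOutput t w k := by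
    rw [sum_residual_mul_derivOutput, neg_neg]
  simp_rw [h]
  rw [Φ.deriv_loss hL hD, integral_neg, integral_finsetSum _ fun k _ => (hint k).const_mul _]
  simp_rw [integral_const_mul]
  ring

theorem integrable_dissipation {t : ℝ} (hint : ∀ k, Integrable (Φ.derivOutput t · k) μ₀) :
    Integrable (Φ.dissipation t) μ₀ :=
  (integrable_finsetSum Finset.univ fun k _ => (hint k).const_mul (Φ.residual t k)).neg.congr <|
    ae_of_all _ fun w => by rw [Pi.neg_apply, sum_residual_mul_derivOutput, neg_neg]

theorem le_dissipation (hβa : 0 ≤ βa) (hG : G.IsHermitian) {lmin : ℝ}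
    (hlmin : ∀ lam : ℝ, (∃ v : Fin n → ℝ, v ≠ 0 ∧ G *ᵥ v = lam • v) → lmin ≤ lam)
    (t : ℝ) (w : ℝ × (Fin n → ℝ)) :
    lmin / n * ∑ k, Φ.residual t k ^ 2 * (Φ.A t w ^ 2 * deriv σ (Φ.U t w k) ^ 2)
      ≤ Φ.dissipation t w := by
  set v := Φ.residualGrad t w with hv
  calc lmin / n * ∑ k, Φ.residual t k ^ 2 * (Φ.A t w ^ 2 * deriv σ (Φ.U t w k) ^ 2)
      = 1 / n * Φ.A t w ^ 2 * (lmin * (v ⬝ᵥ v)) := by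
        simp only [dotProduct, hv, residualGrad, Finset.mul_sum]
        exact Finset.sum_congr rfl fun k _ => by ring
    _ ≤ 1 / n * Φ.A t w ^ 2 * (v ⬝ᵥ G *ᵥ v) := by
        gcongr
        exact hG.mul_dotProduct_self_le_dotProduct_mulVec hlmin v
    _ ≤ Φ.dissipation t w := le_add_of_nonneg_left (by positivity)

theorem integrable_indicator_comp_flow [IsFiniteMeasure μ₀] {S : Set (ℝ × (Fin n → ℝ))}
    (hS : MeasurableSet S) (t : ℝ) :
    Integrable (fun w => S.indicator (1 : ℝ × (Fin n → ℝ) → ℝ) (Φ.A t w, Φ.U t w)) μ₀ :=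
  ((integrable_indicator_iff hS).2 (integrable_const (1 : ℝ)).integrableOn).comp_aemeasurable
    (Φ.continuous_flow t).aemeasurable

theorem integral_indicator_comp_flow {S : Set (ℝ × (Fin n → ℝ))} (hS : MeasurableSet S)
    (t : ℝ) :
    ∫ w, S.indicator (1 : ℝ × (Fin n → ℝ) → ℝ) (Φ.A t w, Φ.U t w) ∂μ₀ = (Φ.μt t).real S := by
  rw [μt, ← integral_indicator_one hS]
  exact (integral_map (Φ.continuous_flow t).aemeasurable
    (aestronglyMeasurable_const.indicator hS)).symm

theorem sum_mul_measureReal_le_integral_dissipation [IsFiniteMeasure μ₀] (hβa : 0 ≤ βa)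
    (hG : G.IsHermitian) {lmin : ℝ} (hlmin₀ : 0 ≤ lmin)
    (hlmin : ∀ lam : ℝ, (∃ v : Fin n → ℝ, v ≠ 0 ∧ G *ᵥ v = lam • v) → lmin ≤ lam)
    {c K : ℝ} {I : Set ℝ} (hc : 0 ≤ c) (hK : 0 ≤ K) (hI : MeasurableSet I)
    (hσ' : ∀ u ∈ I, K ≤ |deriv σ u|) {t : ℝ} (hint : ∀ k, Integrable (Φ.derivOutput t · k) μ₀) :
    lmin / n * ∑ k, Φ.residual t k ^ 2 *
        (c ^ 2 * K ^ 2 * (Φ.μt t).real {p : ℝ × (Fin n → ℝ) | c ≤ |p.1| ∧ p.2 k ∈ I})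
      ≤ ∫ w, Φ.dissipation t w ∂μ₀ := by
  set Ξ : Fin n → Set (ℝ × (Fin n → ℝ)) := fun k => {p | c ≤ |p.1| ∧ p.2 k ∈ I}
  have hΞ k : MeasurableSet (Ξ k) :=
    (measurableSet_le measurable_const measurable_fst.abs).inter
      (hI.preimage ((measurable_pi_apply k).comp measurable_snd))
  have hint_Ξ k : Integrable (fun w => Φ.residual t k ^ 2 *
      (c ^ 2 * K ^ 2 * (Ξ k).indicator 1 (Φ.A t w, Φ.U t w))) μ₀ :=
    ((Φ.integrable_indicator_comp_flow (hΞ k) t).const_mul _).const_mul _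
  calc lmin / n * ∑ k, Φ.residual t k ^ 2 * (c ^ 2 * K ^ 2 * (Φ.μt t).real (Ξ k))
      = ∫ w, lmin / n * ∑ k, Φ.residual t k ^ 2 *
          (c ^ 2 * K ^ 2 * (Ξ k).indicator 1 (Φ.A t w, Φ.U t w)) ∂μ₀ := by
        rw [integral_const_mul, integral_finsetSum _ fun k _ => hint_Ξ k]
        simp_rw [integral_const_mul, Φ.integral_indicator_comp_flow (hΞ _)]
    _ ≤ ∫ w, Φ.dissipation t w ∂μ₀ := by
        refine integral_mono ((integrable_finsetSum _ fun k _ => hint_Ξ k).const_mul _)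
          (Φ.integrable_dissipation hint) fun w => ?_
        refine le_trans ?_ (Φ.le_dissipation hβa hG hlmin t w)
        refine mul_le_mul_of_nonneg_left (Finset.sum_le_sum fun k _ => ?_) (by positivity)
        exact mul_le_mul_of_nonneg_left (mul_indicator_le_sq_mul_sq hc hK hσ' k _) (sq_nonneg _)

end MFFlow

theorem pl_inequality_general
    (n : ℕ) (hn : 1 ≤ n) (y : Fin n → ℝ) (σ : ℝ → ℝ) (βa : ℝ) (hβa : 0 ≤ βa)
    (hσ_diff : Differentiable ℝ σ)
    (Mσ Lσ : ℝ)
    (hσ_bdd : ∀ u : ℝ, |σ u| ≤ Mσ)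
    (hσ'_bdd : ∀ u : ℝ, |deriv σ u| ≤ Lσ)
    (Il Ir K : ℝ) (hK : 0 < K)
    (hσ'_low : ∀ u ∈ Set.Ioo Il Ir, K ≤ |deriv σ u|)
    (G : Matrix (Fin n) (Fin n) ℝ) (hGpsd : G.PosSemidef)
    (lmin : ℝ) (hlmin_nonneg : 0 ≤ lmin)
    (hlmin_min : ∀ lam : ℝ, (∃ v : Fin n → ℝ, v ≠ 0 ∧ G.mulVec v = lam • v) → lmin ≤ lam)
    (μ₀ : Measure (ℝ × (Fin n → ℝ))) (hμ₀ : IsProbabilityMeasure μ₀)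
    (hμ₀_cpt : ∃ Kc : Set ℝ, IsCompact Kc ∧ μ₀ {w | w.1 ∉ Kc} = 0)
    (Φ : MFFlow n y σ βa G μ₀)
    (hloss_diff : ∀ t, 0 ≤ t → DifferentiableAt ℝ Φ.loss t)
    (ahat : ℝ) (hahat : 0 < ahat) (t : ℝ) (ht : 0 ≤ t) :
    (K ^ 2 * lmin * ahat ^ 2 / (2 * n)) *
        (⨅ k : Fin n, (Φ.μt t {w : ℝ × (Fin n → ℝ) |
            ahat / 2 ≤ |w.1| ∧ w.2 k ∈ Set.Ioo Il Ir}).toReal) * Φ.loss t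
      ≤ -(deriv Φ.loss t) := by
  obtain ⟨Kc, hKc, hKc0⟩ := hμ₀_cpt
  obtain ⟨R, hR⟩ := exists_ae_abs_fst_le hKc hKc0
  have hL : ContinuousOn Φ.loss (Icc 0 (t + 1)) := fun s hs =>
    (hloss_diff s hs.1).continuousAt.continuousWithinAt
  choose C hC using Φ.exists_ae_bound_derivOutput hσ_bdd hσ'_bdd hR hL
  have htT : t ∈ Icc 0 (t + 1) := ⟨ht, by linarith⟩
  have hint k := Φ.integrable_derivOutput hσ_diff.continuous htT k (hC k)
  have hdiss := Φ.neg_deriv_loss_eq_integral_dissipation (hloss_diff t ht)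
    (fun k => Φ.hasDerivWithinAt_f hσ_diff ht (lt_add_one t) k (hC k)) hint
  have hn0 : (0 : ℝ) < n := by exact_mod_cast hn
  set μΞ := fun k : Fin n => (Φ.μt t {w : ℝ × (Fin n → ℝ) |
    ahat / 2 ≤ |w.1| ∧ w.2 k ∈ Set.Ioo Il Ir}).toReal
  calc K ^ 2 * lmin * ahat ^ 2 / (2 * n) * (⨅ k, μΞ k) * Φ.loss t
      = 1 / n * (lmin / n * ∑ k, Φ.residual t k ^ 2 * ((ahat / 2) ^ 2 * K ^ 2 * ⨅ k, μΞ k)) := by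
        rw [← Finset.sum_mul, Φ.sum_residual_sq]
        field_simp
    _ ≤ 1 / n * (lmin / n * ∑ k, Φ.residual t k ^ 2 * ((ahat / 2) ^ 2 * K ^ 2 * μΞ k)) := by
        gcongr with k
        exact ciInf_le (Set.finite_range _).bddBelow k
    _ ≤ 1 / n * ∫ w, Φ.dissipation t w ∂μ₀ := by
        gcongr 1 / n * ?_
        exact Φ.sum_mul_measureReal_le_integral_dissipation hβa hGpsd.1 hlmin_nonneg hlmin_min
          (by positivity) hK.le measurableSet_Ioo hσ'_low hint
    _ = -deriv Φ.loss t := hdiss.symm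

/-- Polyak–Łojasiewicz inequality for the mean-field dynamics. -/
theorem pl_inequality
    (n : ℕ) (hn : 1 ≤ n) (y : Fin n → ℝ) (σ : ℝ → ℝ) (βa : ℝ) (hβa : 0 ≤ βa)
    (hσ_diff : Differentiable ℝ σ)
    (Mσ Lσ : ℝ)
    (hσ_bdd : ∀ u : ℝ, |σ u| ≤ Mσ)
    (hσ'_bdd : ∀ u : ℝ, |deriv σ u| ≤ Lσ)
    (Il Ir K : ℝ) (hI : Il < Ir) (hK : 0 < K)
    (hσ'_low : ∀ u ∈ Set.Ioo Il Ir, K ≤ |deriv σ u|)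
    (G : Matrix (Fin n) (Fin n) ℝ) (hGsymm : G.IsSymm) (hGpsd : G.PosSemidef)
    (lmin : ℝ) (hlmin_nonneg : 0 ≤ lmin)
    (hlmin_eig : ∃ v : Fin n → ℝ, v ≠ 0 ∧ G.mulVec v = lmin • v)
    (hlmin_min : ∀ lam : ℝ, (∃ v : Fin n → ℝ, v ≠ 0 ∧ G.mulVec v = lam • v) → lmin ≤ lam)
    (μ₀ : Measure (ℝ × (Fin n → ℝ))) (hμ₀ : IsProbabilityMeasure μ₀)
    (hμ₀_cpt : ∃ Kc : Set ℝ, IsCompact Kc ∧ μ₀ {w | w.1 ∉ Kc} = 0)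
    (Φ : MFFlow n y σ βa G μ₀)
    (hloss_diff : ∀ t, 0 ≤ t → DifferentiableAt ℝ Φ.loss t)
    (ahat : ℝ) (hahat : 0 < ahat) (t : ℝ) (ht : 0 ≤ t) :
    (K ^ 2 * lmin * ahat ^ 2 / (2 * n)) *
        (⨅ k : Fin n, (Φ.μt t {w : ℝ × (Fin n → ℝ) |
            ahat / 2 ≤ |w.1| ∧ w.2 k ∈ Set.Ioo Il Ir}).toReal) * Φ.loss t
      ≤ -(deriv Φ.loss t) :=
  pl_inequality_general n hn y σ βa hβa hσ_diff Mσ Lσ hσ_bdd hσ'_bdd Il Ir K hK hσ'_low G hGpsd lmin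
    hlmin_nonneg hlmin_min μ₀ hμ₀ hμ₀_cpt Φ hloss_diff ahat hahat t ht
end

section
/- Let n ≥ 1, let G and G̃ be real symmetric n×n matrices, and let η > 0 be such that |λ − λ'| ≥ η for every pair of distinct eigenvalues λ ≠ λ' of G. If ‖G̃ − G‖ ≤ η/2, then there exist orthonormal bases (v̄₁,…,v̄ₙ) and (v₁,…,vₙ) of ℝⁿ and real numbers (λ̄₁,…,λ̄ₙ) and (λ₁,…,λₙ) such that G v̄ₖ = λ̄ₖ v̄ₖ and G̃ vₖ = λₖ vₖ for every k ∈ {1,…,n}, and moreover ⟨v̄ₖ, vₖ⟩ ≥ 1 − (2‖G̃ − G‖/η)² for every k ∈ {1,…,n}. -/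
open MeasureTheory

noncomputable section

/-- The operator (spectral) norm of a square real matrix, with respect to the
Euclidean norm. -/
def matOpNorm {n : ℕ} (M : Matrix (Fin n) (Fin n) ℝ) : ℝ :=
  ‖(Matrix.toEuclideanCLM (𝕜 := ℝ) M :
      EuclideanSpace ℝ (Fin n) →L[ℝ] EuclideanSpace ℝ (Fin n))‖

/-!
Write `G = S diag(μ) Sᵀ`, `G' = T diag(μ') Tᵀ` with `S`, `T` orthogonal, and `C = Sᵀ T`.
The Sylvester residual `diag(μ) C - C diag(μ') = Sᵀ (G - G') T` has norm `ε = ‖G' - G‖`.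
Hence every `μ' k` lies within `ε` of an eigenvalue `ν k` of `G`, and, by the gap `η`, at most
the fraction `(2ε/η)²` of the mass of `C x` leaves the block `μ = a` when `x` is supported on the
columns labelled `a`. So the part `B` of `C` that respects the labels (`B j k = C j k` if
`μ j = ν k`, else `0`) satisfies `Bᵀ B ≥ 1 - (2ε/η)²`. Its polar factor `U = B (Bᵀ B)^(-1/2)` is
orthogonal, still respects the labels, and `(Uᵀ C) k k = ((Bᵀ B)^(1/2)) k k ≥ √(1 - (2ε/η)²)`;
the eigenbasis `S U` of `G` does the job. When `2ε ≥ η` the bound is nonpositive and it is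
enough to choose the signs of the eigenvectors of `G`.
-/

open WithLp
open scoped MatrixOrder Matrix.Norms.L2Operator

section EuclideanNorm

variable {ι : Type*} [Fintype ι]

theorem norm_toLp_sq (x : ι → ℝ) : ‖toLp 2 x‖ ^ 2 = ∑ i, x i ^ 2 := by
  simp [EuclideanSpace.norm_sq_eq]

theorem norm_toLp_le_of_abs_le {x y : ι → ℝ} {c : ℝ} (hc : 0 ≤ c)
    (h : ∀ i, |x i| ≤ c * |y i|) : ‖toLp 2 x‖ ≤ c * ‖toLp 2 y‖ := by
  rw [← pow_le_pow_iff_left₀ (norm_nonneg _) (by positivity) two_ne_zero, mul_pow,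
    norm_toLp_sq, norm_toLp_sq, Finset.mul_sum]
  gcongr with i
  rw [← mul_pow, ← sq_abs (x i), ← sq_abs (c * y i), abs_mul, abs_of_nonneg hc]
  exact pow_le_pow_left₀ (abs_nonneg _) (h i) 2

end EuclideanNorm

namespace Matrix

variable {ι : Type*}

theorem transpose_eq_self_of_nonneg {H : Matrix ι ι ℝ} (hH : 0 ≤ H) : Hᵀ = H := by
  simpa [IsHermitian] using (nonneg_iff_posSemidef.1 hH).isHermitian

variable [Fintype ι]

/-- Column `k` of `C` projected onto the eigenspace of `diagonal μ` for the eigenvalue `ν k`. -/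
def blockPart (μ ν : ι → ℝ) (C : Matrix ι ι ℝ) : Matrix ι ι ℝ :=
  of fun j k => if μ j = ν k then C j k else 0

theorem blockPart_mulVec_apply {μ ν : ι → ℝ} {C : Matrix ι ι ℝ} (x : ι → ℝ) (j : ι) :
    (blockPart μ ν C *ᵥ x) j = (C *ᵥ fun k => if ν k = μ j then x k else 0) j := by
  simp only [mulVec, dotProduct, blockPart, of_apply]
  refine Finset.sum_congr rfl fun k _ => ?_
  by_cases h : μ j = ν k <;> simp [h, eq_comm]

variable [DecidableEq ι]

theorem transpose_mem_orthogonalGroup {S : Matrix ι ι ℝ} (hS : S ∈ orthogonalGroup ι ℝ) :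
    Sᵀ ∈ orthogonalGroup ι ℝ := by
  simpa [star_eq_conjTranspose] using Unitary.star_mem hS

theorem norm_toLp_mulVec_of_mem_orthogonalGroup {U : Matrix ι ι ℝ}
    (hU : U ∈ orthogonalGroup ι ℝ) (x : ι → ℝ) :
    ‖toLp 2 (U *ᵥ x)‖ = ‖toLp 2 x‖ := by
  have h : (U *ᵥ x) ⬝ᵥ (U *ᵥ x) = x ⬝ᵥ x := by
    rw [dotProduct_mulVec, vecMul_mulVec, (mem_orthogonalGroup_iff' ι ℝ).1 hU, vecMul_one]
  rw [← sq_eq_sq₀ (norm_nonneg _) (norm_nonneg _), norm_toLp_sq, norm_toLp_sq]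
  simpa [dotProduct, sq] using h

theorem norm_transpose_mul_mul_of_mem_orthogonalGroup {S T : Matrix ι ι ℝ}
    (hS : S ∈ orthogonalGroup ι ℝ) (hT : T ∈ orthogonalGroup ι ℝ) (M : Matrix ι ι ℝ) :
    ‖Sᵀ * M * T‖ = ‖M‖ := by
  rw [CStarRing.norm_mul_mem_unitary _ hT,
    CStarRing.norm_mem_unitary_mul _ (transpose_mem_orthogonalGroup hS)]

theorem sum_col_mul_col_of_mem_orthogonalGroup {P : Matrix ι ι ℝ}
    (hP : P ∈ orthogonalGroup ι ℝ) (k m : ι) :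
    ∑ i, P.col k i * P.col m i = if k = m then 1 else 0 := by
  simpa [mul_apply, one_apply] using
    congrFun (congrFun ((mem_orthogonalGroup_iff' ι ℝ).1 hP) k) m

theorem col_ne_zero_of_mem_orthogonalGroup {P : Matrix ι ι ℝ}
    (hP : P ∈ orthogonalGroup ι ℝ) (k : ι) : P.col k ≠ 0 := by
  intro h
  have hk : ∀ i, P i k = 0 := congrFun h
  simpa [hk] using sum_col_mul_col_of_mem_orthogonalGroup hP k k

theorem mulVec_col_of_mul_eq_mul_diagonal {G P : Matrix ι ι ℝ} {ν : ι → ℝ}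
    (h : G * P = P * diagonal ν) (k : ι) : G *ᵥ P.col k = ν k • P.col k := by
  rw [← mulVec_single_one, mulVec_mulVec, h, ← mulVec_mulVec, mulVec_single, mulVec_smul]
  simp

theorem IsSymm.exists_orthogonal_mul_eq_mul_diagonal {G : Matrix ι ι ℝ} (hG : G.IsSymm) :
    ∃ S ∈ orthogonalGroup ι ℝ, ∃ μ : ι → ℝ, G * S = S * diagonal μ := by
  have hH : G.IsHermitian := isHermitian_iff_isSymm.2 hG
  refine ⟨hH.eigenvectorUnitary, hH.eigenvectorUnitary.2, hH.eigenvalues, ?_⟩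
  ext i j
  have := congrFun (hH.mulVec_eigenvectorBasis j) i
  rw [mul_diagonal]
  simpa [mul_apply, mulVec, dotProduct, mul_comm] using this

theorem exists_orthogonal_mul_eq_mul_diagonal_diag_nonneg {G P : Matrix ι ι ℝ} {ν : ι → ℝ}
    (hP : P ∈ orthogonalGroup ι ℝ) (hGP : G * P = P * diagonal ν) (T : Matrix ι ι ℝ) :
    ∃ Q ∈ orthogonalGroup ι ℝ, G * Q = Q * diagonal ν ∧ ∀ k, 0 ≤ (Qᵀ * T) k k := by
  set s : ι → ℝ := fun k => if 0 ≤ (Pᵀ * T) k k then 1 else -1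
  have hs : diagonal s ∈ orthogonalGroup ι ℝ := by
    rw [mem_orthogonalGroup_iff', diagonal_transpose, diagonal_mul_diagonal, ← diagonal_one]
    congr 1
    ext k
    by_cases h : 0 ≤ (Pᵀ * T) k k <;> simp [s, h]
  refine ⟨P * diagonal s, mul_mem hP hs, ?_, fun k => ?_⟩
  · rw [← Matrix.mul_assoc, hGP, Matrix.mul_assoc, Matrix.mul_assoc, (commute_diagonal ν s).eq]
  · rw [transpose_mul, diagonal_transpose, Matrix.mul_assoc, diagonal_mul]
    by_cases h : 0 ≤ (Pᵀ * T) k k <;> simp [s, h]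
    linarith

theorem smul_one_le_transpose_mul_self {B : Matrix ι ι ℝ} {c : ℝ}
    (h : ∀ x, c * ∑ k, x k ^ 2 ≤ ∑ j, (B *ᵥ x) j ^ 2) : c • 1 ≤ Bᵀ * B := by
  refine PosSemidef.of_dotProduct_mulVec_nonneg ?_ fun x => ?_
  · simp [IsHermitian, conjTranspose_eq_transpose_of_trivial, transpose_sub]
  · have hq : x ⬝ᵥ (Bᵀ * B - c • 1) *ᵥ x =
        ∑ j, (B *ᵥ x) j ^ 2 - c * ∑ k, x k ^ 2 := by
      rw [sub_mulVec, dotProduct_sub, ← mulVec_mulVec, dotProduct_mulVec, vecMul_transpose]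
      simp [dotProduct, sq, Finset.mul_sum, smul_mulVec, mul_left_comm]
    simpa [hq] using h x

theorem smul_one_le_sqrt {A : Matrix ι ι ℝ} {c : ℝ} (hA : c • 1 ≤ A) (hA0 : 0 ≤ A) :
    √c • 1 ≤ CFC.sqrt A := by
  rw [← Algebra.algebraMap_eq_smul_one, algebraMap_le_iff_le_spectrum] at hA
  rw [← Algebra.algebraMap_eq_smul_one, CFC.sqrt_eq_real_sqrt A, cfcₙ_eq_cfc,
    ← cfc_const √c A]
  exact cfc_mono fun x hx => Real.sqrt_le_sqrt (hA x hx)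

theorem exists_orthogonal_polar_factor {B X Y : Matrix ι ι ℝ} {c : ℝ} (hc : 0 < c)
    (hB : c • 1 ≤ Bᵀ * B) (hX : Xᵀ = X) (hY : Yᵀ = Y) (hXY : X * B = B * Y) :
    ∃ U ∈ orthogonalGroup ι ℝ, X * U = U * Y ∧ ∀ k, √c ≤ (Uᵀ * B) k k := by
  set A := Bᵀ * B
  have hA0 : 0 ≤ A := by simpa using (posSemidef_conjTranspose_mul_self B).nonneg
  set H := CFC.sqrt A with hH
  have hHH : H * H = A := CFC.sqrt_mul_sqrt_self A
  have hHt : Hᵀ = H := transpose_eq_self_of_nonneg (CFC.sqrt_nonneg A)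
  have hHc : √c • 1 ≤ H := smul_one_le_sqrt hB hA0
  have hHpos : H.PosDef := by
    simpa using (PosDef.one.smul (Real.sqrt_pos.2 hc)).add_posSemidef (le_iff.1 hHc)
  have hYA : Commute A Y := by
    change Bᵀ * B * Y = Y * (Bᵀ * B)
    calc Bᵀ * B * Y = (X * B)ᵀ * B := by
          rw [transpose_mul, hX, Matrix.mul_assoc, Matrix.mul_assoc, hXY]
      _ = Y * (Bᵀ * B) := by rw [hXY, transpose_mul, hY, Matrix.mul_assoc]
  have hYH : Commute H Y := by
    rw [hH, CFC.sqrt_eq_real_sqrt A, cfcₙ_eq_cfc]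
    exact hYA.cfc_real _
  obtain ⟨u, hu⟩ := hHpos.isUnit
  set K : Matrix ι ι ℝ := ↑u⁻¹
  have hKH : K * H = 1 := hu ▸ u.inv_mul
  have hHK : H * K = 1 := hu ▸ u.mul_inv
  have hKt : Kᵀ = K := by rw [← inv_eq_left_inv hKH, transpose_nonsing_inv, hHt]
  have hYK : Commute K Y := (hu ▸ hYH).units_inv_left
  have hBK : (B * K)ᵀ * B = H := by
    rw [transpose_mul, hKt, Matrix.mul_assoc]
    change K * A = H
    rw [← hHH, ← Matrix.mul_assoc, hKH, Matrix.one_mul]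
  refine ⟨B * K, ?_, ?_, fun k => ?_⟩
  · rw [mem_orthogonalGroup_iff', ← Matrix.mul_assoc, hBK, hHK]
  · rw [← Matrix.mul_assoc, hXY, Matrix.mul_assoc, Matrix.mul_assoc, hYK.eq]
  · rw [hBK]
    simpa using (le_iff.1 hHc).diag_nonneg (i := k)

theorem diagonal_mul_blockPart {μ ν : ι → ℝ} {C : Matrix ι ι ℝ} :
    diagonal μ * blockPart μ ν C = blockPart μ ν C * diagonal ν := by
  ext j k
  by_cases h : μ j = ν k <;> simp [blockPart, h, mul_comm]

theorem apply_eq_zero_of_diagonal_mul_eq_mul_diagonal {μ ν : ι → ℝ} {U : Matrix ι ι ℝ}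
    (hU : diagonal μ * U = U * diagonal ν) {j k : ι} (h : μ j ≠ ν k) : U j k = 0 := by
  have hjk := congrFun (congrFun hU j) k
  rw [diagonal_mul, mul_diagonal] at hjk
  exact (mul_eq_zero.1 (by linear_combination hjk : (μ j - ν k) * U j k = 0)).resolve_left
    (sub_ne_zero.2 h)

theorem transpose_mul_blockPart_apply_self {μ ν : ι → ℝ} {C U : Matrix ι ι ℝ}
    (hU : diagonal μ * U = U * diagonal ν) (k : ι) :
    (Uᵀ * blockPart μ ν C) k k = (Uᵀ * C) k k := by
  simp only [mul_apply, transpose_apply, blockPart, of_apply]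
  refine Finset.sum_congr rfl fun j _ => ?_
  by_cases h : μ j = ν k
  · rw [if_pos h]
  · simp [h, apply_eq_zero_of_diagonal_mul_eq_mul_diagonal hU h]

section Sylvester

variable {μ μ' : ι → ℝ} {C : Matrix ι ι ℝ} {ε : ℝ}

theorem norm_toLp_sub_mul_mulVec_le (hC : C ∈ orthogonalGroup ι ℝ) (x : ι → ℝ) (a : ℝ) :
    ‖toLp 2 (fun j => (μ j - a) * (C *ᵥ x) j)‖ ≤
      ‖diagonal μ * C - C * diagonal μ'‖ * ‖toLp 2 x‖ +
        ‖toLp 2 (fun k => (μ' k - a) * x k)‖ := by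
  have h : (fun j => (μ j - a) * (C *ᵥ x) j) =
      (diagonal μ * C - C * diagonal μ') *ᵥ x + C *ᵥ (fun k => (μ' k - a) * x k) := by
    have hx : (fun k => (μ' k - a) * x k) = diagonal μ' *ᵥ x - a • x := by
      ext k
      simp [mulVec_diagonal, sub_mul]
    ext j
    simp [hx, sub_mulVec, ← mulVec_mulVec, mulVec_diagonal, mulVec_sub, mulVec_smul]
    ring
  rw [h, toLp_add]
  refine (norm_add_le _ _).trans (add_le_add ?_ ?_)
  · simpa using l2_opNorm_mulVec (diagonal μ * C - C * diagonal μ') (toLp 2 x)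
  · rw [norm_toLp_mulVec_of_mem_orthogonalGroup hC]

theorem sum_sq_sub_mul_mulVec_le (hC : C ∈ orthogonalGroup ι ℝ)
    (hR : ‖diagonal μ * C - C * diagonal μ'‖ ≤ ε) {x : ι → ℝ} {a r : ℝ} (hr : 0 ≤ r)
    (hx : ∀ k, x k ≠ 0 → |μ' k - a| ≤ r) :
    ∑ j, (μ j - a) ^ 2 * (C *ᵥ x) j ^ 2 ≤ (ε + r) ^ 2 * ∑ k, x k ^ 2 := by
  have hx' : ‖toLp 2 (fun k => (μ' k - a) * x k)‖ ≤ r * ‖toLp 2 x‖ := by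
    refine norm_toLp_le_of_abs_le hr fun k => ?_
    by_cases hk : x k = 0
    · simp [hk]
    · rw [abs_mul]
      exact mul_le_mul_of_nonneg_right (hx k hk) (abs_nonneg _)
  have h : ‖toLp 2 (fun j => (μ j - a) * (C *ᵥ x) j)‖ ≤ (ε + r) * ‖toLp 2 x‖ := by
    have := mul_le_mul_of_nonneg_right hR (norm_nonneg (toLp 2 x))
    linarith [norm_toLp_sub_mul_mulVec_le (μ := μ) (μ' := μ') hC x a]
  simpa [mul_pow, norm_toLp_sq] using pow_le_pow_left₀ (norm_nonneg _) h 2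

theorem exists_abs_sub_le (hC : C ∈ orthogonalGroup ι ℝ)
    (hR : ‖diagonal μ * C - C * diagonal μ'‖ ≤ ε) (k : ι) :
    ∃ j, |μ j - μ' k| ≤ ε := by
  have hs : ∑ i, (Pi.single k 1 : ι → ℝ) i ^ 2 = 1 := by simp [Pi.single_apply]
  set y := C *ᵥ Pi.single k 1
  have hy : ∑ j, y j ^ 2 = 1 := by
    rw [← norm_toLp_sq, norm_toLp_mulVec_of_mem_orthogonalGroup hC, norm_toLp_sq, hs]
  have h := sum_sq_sub_mul_mulVec_le hC hR le_rfl (x := Pi.single k 1) (a := μ' k)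
    fun k' hk' => by
      obtain rfl : k' = k := by by_contra hne; exact hk' (Pi.single_eq_of_ne hne 1)
      simp
  rw [hs, add_zero, mul_one] at h
  obtain ⟨j, -, hj⟩ := Finset.exists_min_image Finset.univ (fun j => (μ j - μ' k) ^ 2)
    ⟨k, Finset.mem_univ k⟩
  refine ⟨j, abs_le_of_sq_le_sq ?_ ((norm_nonneg _).trans hR)⟩
  calc (μ j - μ' k) ^ 2 = ∑ i, (μ j - μ' k) ^ 2 * y i ^ 2 := by
        rw [← Finset.mul_sum, hy, mul_one]
    _ ≤ ∑ i, (μ i - μ' k) ^ 2 * y i ^ 2 := Finset.sum_le_sum fun i _ =>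
        mul_le_mul_of_nonneg_right (hj i (Finset.mem_univ i)) (sq_nonneg _)
    _ ≤ ε ^ 2 := h

theorem mul_sum_sq_le_sum_sq_mulVec_filter (hC : C ∈ orthogonalGroup ι ℝ)
    (hR : ‖diagonal μ * C - C * diagonal μ'‖ ≤ ε) {η a : ℝ} (hη : 0 < η)
    (hgap : ∀ j, μ j ≠ a → η ≤ |μ j - a|) {y : ι → ℝ}
    (hy : ∀ k, y k ≠ 0 → |μ' k - a| ≤ ε) :
    (1 - (2 * ε / η) ^ 2) * ∑ k, y k ^ 2 ≤ ∑ j with μ j = a, (C *ᵥ y) j ^ 2 := by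
  have hε : 0 ≤ ε := (norm_nonneg _).trans hR
  have hoff : η ^ 2 * ∑ j with μ j ≠ a, (C *ᵥ y) j ^ 2 ≤ (2 * ε) ^ 2 * ∑ k, y k ^ 2 := by
    calc η ^ 2 * ∑ j with μ j ≠ a, (C *ᵥ y) j ^ 2
        ≤ ∑ j with μ j ≠ a, (μ j - a) ^ 2 * (C *ᵥ y) j ^ 2 := by
          rw [Finset.mul_sum]
          refine Finset.sum_le_sum fun j hj => mul_le_mul_of_nonneg_right ?_ (sq_nonneg _)
          rw [← sq_abs (μ j - a)]
          exact pow_le_pow_left₀ hη.le (hgap j (Finset.mem_filter.1 hj).2) 2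
      _ ≤ ∑ j, (μ j - a) ^ 2 * (C *ᵥ y) j ^ 2 :=
          Finset.sum_le_sum_of_subset_of_nonneg (Finset.filter_subset _ _)
            fun _ _ _ => by positivity
      _ ≤ (2 * ε) ^ 2 * ∑ k, y k ^ 2 := by
          simpa [two_mul] using sum_sq_sub_mul_mulVec_le hC hR hε hy
  have htot : ∑ j with μ j = a, (C *ᵥ y) j ^ 2 + ∑ j with μ j ≠ a, (C *ᵥ y) j ^ 2 =
      ∑ k, y k ^ 2 := by
    rw [Finset.sum_filter_add_sum_filter_not, ← norm_toLp_sq, ← norm_toLp_sq,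
      norm_toLp_mulVec_of_mem_orthogonalGroup hC]
  have hoff' : ∑ j with μ j ≠ a, (C *ᵥ y) j ^ 2 ≤ (2 * ε / η) ^ 2 * ∑ k, y k ^ 2 := by
    rw [div_pow, div_mul_eq_mul_div, le_div_iff₀ (by positivity)]
    linarith
  rw [sub_mul, one_mul]
  linarith

theorem smul_one_le_transpose_mul_blockPart (hC : C ∈ orthogonalGroup ι ℝ)
    (hR : ‖diagonal μ * C - C * diagonal μ'‖ ≤ ε) {η : ℝ} (hη : 0 < η)
    (hgap : ∀ j j', μ j ≠ μ j' → η ≤ |μ j - μ j'|) {ν : ι → ℝ}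
    (hν : ∀ k, ∃ j, μ j = ν k) (hνμ' : ∀ k, |μ' k - ν k| ≤ ε) :
    (1 - (2 * ε / η) ^ 2) • 1 ≤ (blockPart μ ν C)ᵀ * blockPart μ ν C := by
  refine smul_one_le_transpose_mul_self fun x => ?_
  set x' : ℝ → ι → ℝ := fun a k => if ν k = a then x k else 0
  have hfib : ∀ a ∈ Finset.univ.image μ,
      (1 - (2 * ε / η) ^ 2) * ∑ k, x' a k ^ 2 ≤ ∑ j with μ j = a, (C *ᵥ x' a) j ^ 2 := by
    intro a ha
    obtain ⟨j₀, -, rfl⟩ := Finset.mem_image.1 ha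
    refine mul_sum_sq_le_sum_sq_mulVec_filter hC hR hη (fun j hj => hgap j j₀ hj)
      fun k hk => ?_
    have : ν k = μ j₀ := by
      by_contra h
      simp [x', h] at hk
    rw [← this]
    exact hνμ' k
  calc (1 - (2 * ε / η) ^ 2) * ∑ k, x k ^ 2
      = ∑ a ∈ Finset.univ.image μ, (1 - (2 * ε / η) ^ 2) * ∑ k, x' a k ^ 2 := by
        rw [← Finset.mul_sum, Finset.sum_comm]
        congr 1
        refine Finset.sum_congr rfl fun k _ => ?_
        obtain ⟨j, hj⟩ := hν k
        simp [x', ite_pow, ← hj]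
    _ ≤ ∑ a ∈ Finset.univ.image μ, ∑ j with μ j = a, (C *ᵥ x' a) j ^ 2 :=
        Finset.sum_le_sum hfib
    _ = ∑ j, (C *ᵥ x' (μ j)) j ^ 2 := by
        rw [← Finset.sum_fiberwise_of_maps_to (g := μ)
          (fun j _ => Finset.mem_image_of_mem μ (Finset.mem_univ j))]
        refine Finset.sum_congr rfl fun a _ => Finset.sum_congr rfl fun j hj => ?_
        rw [(Finset.mem_filter.1 hj).2]
    _ = ∑ j, (blockPart μ ν C *ᵥ x) j ^ 2 := by simp [blockPart_mulVec_apply, x']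

theorem exists_orthogonal_intertwining_near (hC : C ∈ orthogonalGroup ι ℝ)
    (hR : ‖diagonal μ * C - C * diagonal μ'‖ ≤ ε) {η : ℝ} (hη : 0 < η)
    (hgap : ∀ j j', μ j ≠ μ j' → η ≤ |μ j - μ j'|) (hε : 2 * ε < η) :
    ∃ U ∈ orthogonalGroup ι ℝ, ∃ ν : ι → ℝ, diagonal μ * U = U * diagonal ν ∧
      ∀ k, √(1 - (2 * ε / η) ^ 2) ≤ (Uᵀ * C) k k := by
  choose j hj using exists_abs_sub_le hC hR
  have hδ : 0 ≤ 2 * ε / η := div_nonneg (by linarith [(norm_nonneg _).trans hR]) hη.le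
  have hδ1 : 2 * ε / η < 1 := (div_lt_one hη).2 hε
  have hB := smul_one_le_transpose_mul_blockPart hC hR hη hgap (ν := μ ∘ j)
    (fun k => ⟨j k, rfl⟩) fun k => by rw [abs_sub_comm]; exact hj k
  obtain ⟨U, hU, hUμ, hUdiag⟩ := exists_orthogonal_polar_factor (by nlinarith) hB
    (diagonal_transpose μ) (diagonal_transpose _) diagonal_mul_blockPart
  exact ⟨U, hU, μ ∘ j, hUμ, fun k =>
    (hUdiag k).trans_eq (transpose_mul_blockPart_apply_self hUμ k)⟩

end Sylvester

theorem norm_diagonal_mul_sub_mul_diagonal_eq {G G' S T : Matrix ι ι ℝ} {μ μ' : ι → ℝ}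
    (hS : S ∈ orthogonalGroup ι ℝ) (hT : T ∈ orthogonalGroup ι ℝ)
    (hGS : G * S = S * diagonal μ) (hG'T : G' * T = T * diagonal μ') :
    ‖diagonal μ * (Sᵀ * T) - Sᵀ * T * diagonal μ'‖ = ‖G - G'‖ := by
  have hSG : Sᵀ * G = diagonal μ * Sᵀ := by
    calc Sᵀ * G = Sᵀ * (G * S) * Sᵀ := by
          rw [Matrix.mul_assoc, Matrix.mul_assoc, (mem_orthogonalGroup_iff ι ℝ).1 hS,
            Matrix.mul_one]
      _ = diagonal μ * Sᵀ := by
          rw [hGS, ← Matrix.mul_assoc, (mem_orthogonalGroup_iff' ι ℝ).1 hS, Matrix.one_mul]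
  rw [← norm_transpose_mul_mul_of_mem_orthogonalGroup hS hT (G - G'), Matrix.mul_sub,
    Matrix.sub_mul, hSG]
  simp only [Matrix.mul_assoc, hG'T]

theorem exists_orthogonal_eigenbasis_near {G S T : Matrix ι ι ℝ} {μ μ' : ι → ℝ} {ε η : ℝ}
    (hS : S ∈ orthogonalGroup ι ℝ) (hT : T ∈ orthogonalGroup ι ℝ)
    (hGS : G * S = S * diagonal μ) (hR : ‖diagonal μ * (Sᵀ * T) - Sᵀ * T * diagonal μ'‖ ≤ ε)
    (hη : 0 < η) (hgap : ∀ j j', μ j ≠ μ j' → η ≤ |μ j - μ j'|) :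
    ∃ P ∈ orthogonalGroup ι ℝ, ∃ ν : ι → ℝ,
      G * P = P * diagonal ν ∧ ∀ k, 1 - (2 * ε / η) ^ 2 ≤ (Pᵀ * T) k k := by
  by_cases hε : 2 * ε < η
  · obtain ⟨U, hU, ν, hUμ, hUC⟩ := exists_orthogonal_intertwining_near
      (mul_mem (transpose_mem_orthogonalGroup hS) hT) hR hη hgap hε
    refine ⟨S * U, mul_mem hS hU, ν, ?_, fun k => ?_⟩
    · rw [← Matrix.mul_assoc, hGS, Matrix.mul_assoc, hUμ, Matrix.mul_assoc]
    · rw [transpose_mul, Matrix.mul_assoc]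
      exact (Real.le_sqrt_self_iff.2 (sub_le_self _ (sq_nonneg _))).trans (hUC k)
  · obtain ⟨Q, hQ, hGQ, hQT⟩ := exists_orthogonal_mul_eq_mul_diagonal_diag_nonneg hS hGS T
    refine ⟨Q, hQ, μ, hGQ, fun k => le_trans ?_ (hQT k)⟩
    have : 1 ≤ 2 * ε / η := (one_le_div hη).2 (not_lt.1 hε)
    nlinarith

end Matrix

open Matrix in
theorem eigenbasis_perturbation_general
    (n : ℕ) (G G' : Matrix (Fin n) (Fin n) ℝ)
    (hGsymm : G.IsSymm) (hG'symm : G'.IsSymm)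
    (η : ℝ) (hη : 0 < η)
    (hgap : ∀ lam lam' : ℝ,
      (∃ v : Fin n → ℝ, v ≠ 0 ∧ G.mulVec v = lam • v) →
      (∃ v : Fin n → ℝ, v ≠ 0 ∧ G.mulVec v = lam' • v) →
      lam ≠ lam' → η ≤ |lam - lam'|) :
    ∃ vb v : Fin n → (Fin n → ℝ), ∃ lb l : Fin n → ℝ,
      (∀ k m : Fin n, (∑ i, vb k i * vb m i) = if k = m then (1:ℝ) else 0) ∧
      (∀ k m : Fin n, (∑ i, v k i * v m i) = if k = m then (1:ℝ) else 0) ∧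
      (∀ k : Fin n, G.mulVec (vb k) = lb k • vb k) ∧
      (∀ k : Fin n, G'.mulVec (v k) = l k • v k) ∧
      (∀ k : Fin n, 1 - (2 * matOpNorm (G' - G) / η) ^ 2 ≤ ∑ i, vb k i * v k i) := by
  obtain ⟨S, hS, μ, hGS⟩ := hGsymm.exists_orthogonal_mul_eq_mul_diagonal
  obtain ⟨T, hT, μ', hG'T⟩ := hG'symm.exists_orthogonal_mul_eq_mul_diagonal
  have hR : ‖diagonal μ * (Sᵀ * T) - Sᵀ * T * diagonal μ'‖ ≤ matOpNorm (G' - G) :=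
    (norm_diagonal_mul_sub_mul_diagonal_eq hS hT hGS hG'T).trans_le (norm_sub_rev G G').le
  have hgapμ : ∀ j j', μ j ≠ μ j' → η ≤ |μ j - μ j'| := fun j j' =>
    hgap _ _
      ⟨S.col j, col_ne_zero_of_mem_orthogonalGroup hS j, mulVec_col_of_mul_eq_mul_diagonal hGS j⟩
      ⟨S.col j', col_ne_zero_of_mem_orthogonalGroup hS j',
        mulVec_col_of_mul_eq_mul_diagonal hGS j'⟩
  obtain ⟨P, hP, ν, hGP, hPT⟩ := exists_orthogonal_eigenbasis_near hS hT hGS hR hη hgapμ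
  exact ⟨P.col, T.col, ν, μ', sum_col_mul_col_of_mem_orthogonalGroup hP,
    sum_col_mul_col_of_mem_orthogonalGroup hT, mulVec_col_of_mul_eq_mul_diagonal hGP,
    mulVec_col_of_mul_eq_mul_diagonal hG'T, fun k => by simpa [mul_apply] using hPT k⟩

/-- Davis–Kahan-type stability of eigenbases under
perturbation. -/
theorem eigenbasis_perturbation
    (n : ℕ) (hn : 1 ≤ n) (G G' : Matrix (Fin n) (Fin n) ℝ)
    (hGsymm : G.IsSymm) (hG'symm : G'.IsSymm)
    (η : ℝ) (hη : 0 < η)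
    (hgap : ∀ lam lam' : ℝ,
      (∃ v : Fin n → ℝ, v ≠ 0 ∧ G.mulVec v = lam • v) →
      (∃ v : Fin n → ℝ, v ≠ 0 ∧ G.mulVec v = lam' • v) →
      lam ≠ lam' → η ≤ |lam - lam'|)
    (hclose : matOpNorm (G' - G) ≤ η / 2) :
    ∃ vb v : Fin n → (Fin n → ℝ), ∃ lb l : Fin n → ℝ,
      (∀ k m : Fin n, (∑ i, vb k i * vb m i) = if k = m then (1:ℝ) else 0) ∧
      (∀ k m : Fin n, (∑ i, v k i * v m i) = if k = m then (1:ℝ) else 0) ∧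
      (∀ k : Fin n, G.mulVec (vb k) = lb k • vb k) ∧
      (∀ k : Fin n, G'.mulVec (v k) = l k • v k) ∧
      (∀ k : Fin n, 1 - (2 * matOpNorm (G' - G) / η) ^ 2 ≤ ∑ i, vb k i * v k i) :=
  eigenbasis_perturbation_general n G G' hGsymm hG'symm η hη hgap
end
end
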